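/- Let g ≥ 0 and n ≥ 1 be integers. For any two points a, b ∈ U_{g,n}, the points a and b lie in the same connected component of U_{g,n} if and only if for every subset J ⊆ {1,…,n} with |J| ≥ 2, one has Σ_{j∈J} a_j < 1 if and only if Σ_{j∈J} b_j < 1. -/

import Mathlib

/-!
Each `x ↦ ∑_{j ∈ J} x_j` is continuous and omits the value `1` on `U_{g,n}`, so by the
intermediate value theorem it stays on one side of `1` along a connected component.
Conversely, the points of `U_{g,n}` on the same side of every wall as `a` form an
intersection of the convex set `D_{g,n}` with open half-spaces; being convex, this set is
connected and hence lies in the component of `a`.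
-/

/-- The Hassett domain `D_{g,n} = {a ∈ (0,1]^n : a₁ + ⋯ + aₙ > 2 - 2g}`. -/
def hassettDomain (g n : ℕ) : Set (Fin n → ℝ) :=
  {a | (∀ j, 0 < a j ∧ a j ≤ 1) ∧ (2 : ℝ) - 2 * g < ∑ j, a j}

/-- The wall `W_J = {a ∈ D_{g,n} : ∑_{j ∈ J} a_j = 1}`. -/
def hassettWall (g n : ℕ) (J : Finset (Fin n)) : Set (Fin n → ℝ) :=
  {a ∈ hassettDomain g n | ∑ j ∈ J, a j = 1}

/-- The complement of the walls `U_{g,n} = D_{g,n} \ ⋃_{|J| ≥ 2} W_J`. -/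
def hassettChamberSpace (g n : ℕ) : Set (Fin n → ℝ) :=
  hassettDomain g n \ ⋃ (J : Finset (Fin n)) (_ : 2 ≤ J.card), hassettWall g n J

theorem IsPreconnected.lt_iff_lt_of_forall_ne {X α : Type*} [TopologicalSpace X]
    [TopologicalSpace α] [LinearOrder α] [OrderClosedTopology α] {s : Set X}
    (hs : IsPreconnected s) {f : X → α} (hf : ContinuousOn f s) {c : α}
    (hc : ∀ z ∈ s, f z ≠ c) {x y : X} (hx : x ∈ s) (hy : y ∈ s) :
    f x < c ↔ f y < c := by
  have side {x y : X} (hx : x ∈ s) (hy : y ∈ s) (hxc : f x < c) : f y < c := by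
    by_contra! hyc
    obtain ⟨z, hz, hfz⟩ := hs.intermediate_value₂ hx hy hf continuousOn_const hxc.le hyc
    exact hc z hz hfz
  exact ⟨side hx hy, side hy hx⟩

theorem Convex.setOf_ne_and_lt_iff {E : Type*} [AddCommGroup E] [Module ℝ E] {f : E → ℝ}
    (hf : IsLinearMap ℝ f) (c : ℝ) (p : Prop) :
    Convex ℝ {x | f x ≠ c ∧ (f x < c ↔ p)} := by
  by_cases hp : p
  · convert convex_halfSpace_lt hf c using 1
    ext x
    simp only [Set.mem_ofPred_eq, hp, iff_true]
    exact ⟨And.right, fun h => ⟨h.ne, h⟩⟩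
  · convert convex_halfSpace_gt hf c using 1
    ext x
    simp only [Set.mem_ofPred_eq, hp, iff_false, not_lt]
    exact ⟨fun h => lt_of_le_of_ne' h.2 h.1, fun h => ⟨h.ne', h.le⟩⟩

theorem isLinearMap_sum_apply {ι : Type*} (J : Finset ι) :
    IsLinearMap ℝ (fun x : ι → ℝ => ∑ j ∈ J, x j) :=
  ⟨fun x y => Finset.sum_add_distrib, fun c x => by simp [Finset.mul_sum]⟩

theorem convex_hassettDomain (g n : ℕ) : Convex ℝ (hassettDomain g n) := by
  have hD : hassettDomain g n =
      (Set.univ.pi fun _ => Set.Ioc (0 : ℝ) 1) ∩ {x | (2 : ℝ) - 2 * g < ∑ j, x j} := by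
    ext x
    simp [hassettDomain, Set.mem_pi]
  rw [hD]
  exact (convex_pi fun _ _ => convex_Ioc 0 1).inter
    (convex_halfSpace_gt (isLinearMap_sum_apply Finset.univ) _)

theorem mem_hassettChamberSpace_iff {g n : ℕ} {x : Fin n → ℝ} :
    x ∈ hassettChamberSpace g n ↔
      x ∈ hassettDomain g n ∧ ∀ J : Finset (Fin n), 2 ≤ J.card → ∑ j ∈ J, x j ≠ 1 := by
  simp only [hassettChamberSpace, hassettWall, Set.mem_sdiff, Set.mem_iUnion₂, Set.mem_ofPred_eq,
    exists_prop]
  grind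

def hassettChamber (g n : ℕ) (a : Fin n → ℝ) : Set (Fin n → ℝ) :=
  {x ∈ hassettChamberSpace g n |
    ∀ J : Finset (Fin n), 2 ≤ J.card → (∑ j ∈ J, x j < 1 ↔ ∑ j ∈ J, a j < 1)}

theorem convex_hassettChamber (g n : ℕ) (a : Fin n → ℝ) : Convex ℝ (hassettChamber g n a) := by
  have hC : hassettChamber g n a = hassettDomain g n ∩
      ⋂ (J : Finset (Fin n)) (_ : 2 ≤ J.card),
        {x | ∑ j ∈ J, x j ≠ 1 ∧ (∑ j ∈ J, x j < 1 ↔ ∑ j ∈ J, a j < 1)} := by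
    ext x
    simp only [hassettChamber, mem_hassettChamberSpace_iff, Set.mem_ofPred_eq, Set.mem_inter_iff,
      Set.mem_iInter]
    grind
  rw [hC]
  exact (convex_hassettDomain g n).inter <| convex_iInter₂ fun J _ =>
    Convex.setOf_ne_and_lt_iff (isLinearMap_sum_apply J) 1 _

theorem connectedComponentIn_hassettChamberSpace {g n : ℕ} {a : Fin n → ℝ}
    (ha : a ∈ hassettChamberSpace g n) :
    connectedComponentIn (hassettChamberSpace g n) a = hassettChamber g n a := by
  have haC : a ∈ hassettChamber g n a := ⟨ha, fun _ _ => Iff.rfl⟩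
  apply subset_antisymm
  · intro x hx
    have hU := connectedComponentIn_subset (hassettChamberSpace g n) a
    refine ⟨hU hx, fun J hJ => ?_⟩
    refine isPreconnected_connectedComponentIn.lt_iff_lt_of_forall_ne
      (continuous_finsetSum J fun j _ => continuous_apply j).continuousOn
      (fun z hz => (mem_hassettChamberSpace_iff.mp (hU hz)).2 J hJ) hx
      (mem_connectedComponentIn ha)
  · exact (convex_hassettChamber g n a).isPreconnected.subset_connectedComponentIn haC
      (fun x hx => hx.1)

theorem stmt1_general (g n : ℕ)
    (a b : Fin n → ℝ)
    (ha : a ∈ hassettChamberSpace g n) (hb : b ∈ hassettChamberSpace g n) :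
    b ∈ connectedComponentIn (hassettChamberSpace g n) a ↔
      ∀ J : Finset (Fin n), 2 ≤ J.card →
        ((∑ j ∈ J, a j < 1) ↔ (∑ j ∈ J, b j < 1)) := by
  rw [connectedComponentIn_hassettChamberSpace ha]
  simp only [hassettChamber, Set.mem_ofPred_eq, hb, true_and]
  exact forall₂_congr fun _ _ => Iff.comm

theorem stmt1 (g n : ℕ) (hn : 1 ≤ n)
    (a b : Fin n → ℝ)
    (ha : a ∈ hassettChamberSpace g n) (hb : b ∈ hassettChamberSpace g n) :
    b ∈ connectedComponentIn (hassettChamberSpace g n) a ↔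
      ∀ J : Finset (Fin n), 2 ≤ J.card →
        ((∑ j ∈ J, a j < 1) ↔ (∑ j ∈ J, b j < 1)) :=
  stmt1_general g n a b ha hb
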